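/- Let δ be an element with δ² = −β in the ring R = ℂ[√(−β), δ]/(δ²+β), and work in the formal power series ring R[[t]] (allowing square roots and fractional powers defined by binomial series). Then ((1−t√(−β))/(1+t√(−β)))^{δ/(4√(−β))} + ((1−t√(−β))/(1+t√(−β)))^{−δ/(4√(−β))} = (√(1−t√(−β)) + √(1+t√(−β)))/(1+βt²)^{1/4}. -/

import Mathlib

/-!
Put `F = (u + v) w`, `H = (v - u) w`, `G = p + q`, `K = q - p` and `L = 1 - s²X²`.
Leibniz's rule and `δ² = s²` show that both `(F, δH)` and `(G, sK)` solve the linear system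
`2L x' = y - s²X x`, `2L y' = s² x - s²X y`, and both take the initial value `(2, 0)`.
Since `2L` is invertible, a solution vanishing at `0` vanishes to every order, so `F = G`.
-/

open PowerSeries

namespace PowerSeries

variable {R : Type*} [CommRing R]

theorem eq_zero_of_forall_X_pow_dvd {f : R⟦X⟧} (h : ∀ n, X ^ n ∣ f) : f = 0 := by
  ext n
  exact X_pow_dvd_iff.mp (h (n + 1)) n n.lt_succ_self

theorem X_pow_succ_dvd_of_dvd_derivative [IsAddTorsionFree R] {f : R⟦X⟧} {n : ℕ}
    (h0 : constantCoeff f = 0) (hd : X ^ n ∣ d⁄dX R f) : X ^ (n + 1) ∣ f := by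
  rw [X_pow_dvd_iff] at hd ⊢
  rintro (_ | m) hm
  · simpa using h0
  · have h : (m + 1) • coeff (m + 1) f = 0 := by
      rw [nsmul_eq_mul, mul_comm, Nat.cast_succ, ← coeff_derivative]
      exact hd m (by omega)
    exact (smul_eq_zero.mp h).resolve_left m.succ_ne_zero

theorem eq_zero_of_linear_system [IsAddTorsionFree R] {U α β γ ε x y : R⟦X⟧} (hU : IsUnit U)
    (hx : U * d⁄dX R x = α * x + β * y) (hy : U * d⁄dX R y = γ * x + ε * y)
    (hx0 : constantCoeff x = 0) (hy0 : constantCoeff y = 0) : x = 0 ∧ y = 0 := by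
  have hdvd : ∀ n, X ^ n ∣ x ∧ X ^ n ∣ y := by
    intro n
    induction n with
    | zero => simp
    | succ n ih =>
      obtain ⟨hxn, hyn⟩ := ih
      have hdx : X ^ n ∣ d⁄dX R x :=
        (hU.dvd_mul_left).mp (hx ▸ dvd_add (hxn.mul_left α) (hyn.mul_left β))
      have hdy : X ^ n ∣ d⁄dX R y :=
        (hU.dvd_mul_left).mp (hy ▸ dvd_add (hxn.mul_left γ) (hyn.mul_left ε))
      exact ⟨X_pow_succ_dvd_of_dvd_derivative hx0 hdx, X_pow_succ_dvd_of_dvd_derivative hy0 hdy⟩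
  exact ⟨eq_zero_of_forall_X_pow_dvd fun n ↦ (hdvd n).1,
    eq_zero_of_forall_X_pow_dvd fun n ↦ (hdvd n).2⟩

end PowerSeries

section PairODE

variable {R : Type*} [CommRing R]

/-- Solved by `x = 2g cosh θ`, `y = 2sg sinh θ` when `c = s²`, `2(1 - s²X²) θ' = s` and
`g = (1 - s²X²)^{1/4}`. -/
def SolvesPairODE (c : R) (x y : R⟦X⟧) : Prop :=
  2 * (1 - C c * X ^ 2) * d⁄dX R x = y - C c * X * x ∧
    2 * (1 - C c * X ^ 2) * d⁄dX R y = C c * x - C c * X * y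

theorem SolvesPairODE.eq [Algebra ℚ R] {c : R} {x₁ y₁ x₂ y₂ : R⟦X⟧}
    (h₁ : SolvesPairODE c x₁ y₁) (h₂ : SolvesPairODE c x₂ y₂)
    (hx : constantCoeff x₁ = constantCoeff x₂) (hy : constantCoeff y₁ = constantCoeff y₂) :
    x₁ = x₂ := by
  have := IsAddTorsionFree.of_module_rat R
  have h2 : IsUnit (2 : R) := by
    rw [← map_ofNat (algebraMap ℚ R) 2]
    exact (isUnit_iff_ne_zero.mpr two_ne_zero).map _
  have hU : IsUnit (2 * (1 - C c * X ^ 2) : R⟦X⟧) := by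
    rw [← map_ofNat C 2]
    exact (h2.map C).mul (isUnit_iff_constantCoeff.mpr (by simp))
  refine sub_eq_zero.mp (eq_zero_of_linear_system (α := -(C c * X)) (β := 1) (γ := C c)
    (ε := -(C c * X)) (y := y₁ - y₂) hU ?_ ?_ ?_ ?_).1
  · rw [map_sub]; linear_combination h₁.1 - h₂.1
  · rw [map_sub]; linear_combination h₁.2 - h₂.2
  · rw [map_sub, hx, sub_self]
  · rw [map_sub, hy, sub_self]

theorem solvesPairODE_sqrt_add_sqrt (s : R) {p q : R⟦X⟧}
    (hp : 2 * (1 - C s * X) * d⁄dX R p = -C s * p)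
    (hq : 2 * (1 + C s * X) * d⁄dX R q = C s * q) :
    SolvesPairODE (s ^ 2) (p + q) (C s * (q - p)) := by
  simp only [SolvesPairODE, map_pow, Derivation.leibniz, derivative_C, map_add, map_sub,
    smul_eq_mul, mul_zero, add_zero]
  constructor
  · linear_combination (1 + C s * X) * hp + (1 - C s * X) * hq
  · linear_combination (C s * (1 - C s * X)) * hq - (C s * (1 + C s * X)) * hp

theorem solvesPairODE_pow_add_pow_mul {δ c : R} (hδ : δ ^ 2 = c) {u v w : R⟦X⟧}
    (hu : 2 * (1 - C c * X ^ 2) * d⁄dX R u = -C δ * u)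
    (hv : 2 * (1 - C c * X ^ 2) * d⁄dX R v = C δ * v)
    (hw : 2 * (1 - C c * X ^ 2) * d⁄dX R w = -C c * X * w) :
    SolvesPairODE c ((u + v) * w) (C δ * ((v - u) * w)) := by
  subst hδ
  simp only [map_pow] at hu hv hw
  simp only [SolvesPairODE, map_pow, Derivation.leibniz, derivative_C, map_add, map_sub,
    smul_eq_mul, mul_zero, add_zero]
  constructor
  · linear_combination w * hu + w * hv + (u + v) * hw
  · linear_combination (C δ * w) * hv - (C δ * w) * hu + (C δ * (v - u)) * hw

end PairODE

theorem stmt5 {R : Type*} [CommRing R] [Algebra ℚ R]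
    (s δ : R) (hδ : δ ^ 2 = s ^ 2)
    (u v p q w : PowerSeries R)
    (hu0 : constantCoeff u = 1)
    (hu : (1 - C (s ^ 2) * X ^ 2) * u.derivativeFun = C (-((1/2 : ℚ) • δ)) * u)
    (hv0 : constantCoeff v = 1)
    (hv : (1 - C (s ^ 2) * X ^ 2) * v.derivativeFun = C ((1/2 : ℚ) • δ) * v)
    (hp0 : constantCoeff p = 1)
    (hp : 2 * (1 - C s * X) * p.derivativeFun = C (-s) * p)
    (hq0 : constantCoeff q = 1)
    (hq : 2 * (1 + C s * X) * q.derivativeFun = C s * q)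
    (hw0 : constantCoeff w = 1)
    (hw : 2 * (1 - C (s ^ 2) * X ^ 2) * w.derivativeFun = C (-(s ^ 2)) * X * w) :
    (u + v) * w = p + q := by
  have two_half : C (2 * ((1/2 : ℚ) • δ)) = C δ := by
    rw [Algebra.smul_def, ← mul_assoc, ← map_ofNat (algebraMap ℚ R), ← map_mul]
    norm_num
  have hu' : 2 * (1 - C (s ^ 2) * X ^ 2) * d⁄dX R u = -C δ * u := by
    rw [← two_half, map_mul, map_ofNat, mul_assoc]
    exact (congrArg (2 * ·) hu).trans (by simp only [map_neg]; ring)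
  have hv' : 2 * (1 - C (s ^ 2) * X ^ 2) * d⁄dX R v = C δ * v := by
    rw [← two_half, map_mul, map_ofNat, mul_assoc]
    exact (congrArg (2 * ·) hv).trans (by ring)
  rw [map_neg] at hp hw
  refine (solvesPairODE_pow_add_pow_mul hδ hu' hv' hw).eq
    (solvesPairODE_sqrt_add_sqrt s hp hq) ?_ ?_ <;> simp [hu0, hv0, hp0, hq0, hw0]
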